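/- For all n ≥ 1 and k ≥ 1, the Catalan convolution satisfies C_{n,k} = sum over all nonnegative integer k-tuples (a_1,...,a_k) with a_1+...+a_k = n-k of the product C_{a_1} · C_{a_2} · ... · C_{a_k}, where C_m denotes the m-th Catalan number. -/

import Mathlib

/-!
The products `∏ catalan (t i)` summed over compositions of `m` into `k` parts are the
coefficients of `X ^ m` in `C ^ k`, where `C = ∑ catalan n X ^ n` satisfies `C = 1 + X C ^ 2`.
Multiplying this functional equation by `C ^ k` gives `C ^ (k + 1) = C ^ k + X C ^ (k + 2)`, a
Pascal-type recurrence for the coefficients, and the ballot numbers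
`k / (2m + k) · binomial(2m + k, m)` satisfy the same recurrence with the same initial values.
With the denominator cleared, this holds in `ℕ` for all `m` and `k`.
-/

/-- The Catalan convolution `C_{n,k} = (k/(2n-k)) · binomial(2n-k, n)`. -/
def catalanConv (n k : ℕ) : ℚ := (k : ℚ) / ((2 * n - k : ℕ) : ℚ) * ((2 * n - k).choose n : ℚ)

open Finset

namespace PowerSeries

theorem coeff_pow_eq_sum_antidiagonalTuple {R : Type*} [CommSemiring R] (φ : R⟦X⟧) (k n : ℕ) :
    coeff n (φ ^ k) = ∑ t ∈ Nat.antidiagonalTuple k n, ∏ i, coeff (t i) φ := by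
  rw [← Fin.prod_const, coeff_prod, ← piAntidiag_univ_fin_eq_antidiagonalTuple]
  exact sum_nbij' (fun l ↦ ⇑l) (fun t ↦ Finsupp.equivFunOnFinite.symm t)
    (by simp) (by simp) (by simp) (by simp) (by simp)

theorem catalanSeries_pow_succ (k : ℕ) :
    catalanSeries ^ (k + 1) = catalanSeries ^ k + X * catalanSeries ^ (k + 2) := by
  calc catalanSeries ^ (k + 1) = catalanSeries ^ k * (catalanSeries ^ 2 * X + 1) := by
        rw [catalanSeries_sq_mul_X_add_one, pow_succ]
    _ = _ := by ring

theorem two_mul_add_mul_coeff_catalanSeries_pow (m k : ℕ) :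
    (2 * m + k) * coeff m (catalanSeries ^ k) = k * (2 * m + k).choose m := by
  induction m generalizing k with
  | zero => simp
  | succ m ih =>
    induction k with
    | zero => simp [coeff_one]
    | succ k ihk =>
      have hpascal := Nat.choose_succ_succ' (2 * m + k + 2) m
      have habsorb := Nat.add_one_mul_choose_eq (2 * m + k + 2) m
      have hshift := ih (k + 2)
      rw [show 2 * (m + 1) + k = 2 * m + k + 2 by ring] at ihk
      rw [show 2 * m + (k + 2) = 2 * m + k + 2 by ring] at hshift
      rw [show 2 * (m + 1) + (k + 1) = 2 * m + k + 2 + 1 by ring, catalanSeries_pow_succ, map_add,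
        coeff_succ_X_mul]
      refine Nat.eq_of_mul_eq_mul_left (n := 2 * m + k + 2) (by omega) ?_
      rw [hpascal] at habsorb ⊢
      linear_combination (2 * m + k + 3) * (ihk + hshift) + 2 * habsorb

end PowerSeries

open PowerSeries in
theorem catalanConv_eq_sum_products_general (n k : ℕ) (hk : 1 ≤ k) (hkn : k ≤ n) :
    catalanConv n k =
      ∑ t ∈ Finset.Nat.antidiagonalTuple k (n - k), ∏ i : Fin k, (catalan (t i) : ℚ) := by
  have hsum : ∑ t ∈ Finset.Nat.antidiagonalTuple k (n - k), ∏ i : Fin k, (catalan (t i) : ℚ) =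
      (coeff (n - k) (catalanSeries ^ k) : ℕ) := by
    simp only [coeff_pow_eq_sum_antidiagonalTuple, catalanSeries_coeff, Nat.cast_sum,
      Nat.cast_prod]
  have hcoeff := two_mul_add_mul_coeff_catalanSeries_pow (n - k) k
  rw [show 2 * (n - k) + k = 2 * n - k by omega,
    ← Nat.choose_symm_of_eq_add (by omega : 2 * n - k = n + (n - k))] at hcoeff
  have hpos : ((2 * n - k : ℕ) : ℚ) ≠ 0 := by norm_cast; omega
  rw [hsum, catalanConv, div_mul_eq_mul_div, div_eq_iff hpos, mul_comm _ ((2 * n - k : ℕ) : ℚ)]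
  exact_mod_cast hcoeff.symm

theorem catalanConv_eq_sum_products (n k : ℕ) (hn : 1 ≤ n) (hk : 1 ≤ k) (hkn : k ≤ n) :
    catalanConv n k =
      ∑ t ∈ Finset.Nat.antidiagonalTuple k (n - k), ∏ i : Fin k, (catalan (t i) : ℚ) :=
  catalanConv_eq_sum_products_general n k hk hkn
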